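/- Let T be a rose tree with n nodes and preorder listing v₁,…,v_n. For 1 ≤ i ≤ n let p_i be the position of the i-th '(' in F(T) and q_i the position of its matching ')'. Then for i < j, v_i is the parent of v_j in T if and only if (p_i,q_i) is the closest enclosing pair of (p_j,q_j): that is, p_i < p_j and q_j < q_i, and there is no index t with p_i < p_t < p_j and q_j < q_t < q_i. -/

import Mathlib

/-- A rooted ordered tree (rose tree): a node together with a finite list of child subtrees. -/
inductive RoseTree where
  | node : List RoseTree → RoseTree

namespace RoseTree

mutual
/-- The folklore encoding over the alphabet {(, )}, with `true` = '(' and `false` = ')':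
`F (node [t₁,…,t_k]) = '(' ++ F t₁ ++ ⋯ ++ F t_k ++ ')'`. -/
def F : RoseTree → List Bool
  | .node ts => true :: FList ts ++ [false]
def FList : List RoseTree → List Bool
  | [] => []
  | t :: ts => F t ++ FList ts
end

mutual
/-- The list of nodes of a rose tree in preorder, where each node is identified with
its path from the root (the list of child indices taken along the way). -/
def preorderPaths : RoseTree → List (List ℕ)
  | .node ts => [] :: preorderPathsAux 0 ts
def preorderPathsAux : ℕ → List RoseTree → List (List ℕ)
  | _, [] => []
  | k, t :: ts => ((preorderPaths t).map (fun p => k :: p)) ++ preorderPathsAux (k+1) ts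
end

mutual
/-- The number of nodes of a rose tree: 1 plus the sum over children. -/
def size : RoseTree → ℕ
  | .node ts => 1 + sizeList ts
def sizeList : List RoseTree → ℕ
  | [] => 0
  | t :: ts => size t + sizeList ts
end
end RoseTree

/-- A string over {(, )} is balanced if it has equally many '(' and ')' and every
prefix has at least as many '(' as ')'. -/
def BalancedParen (s : List Bool) : Prop :=
  s.count true = s.count false ∧ ∀ k : ℕ, (s.take k).count false ≤ (s.take k).count true

/-- The contiguous substring of `S` from position `p` to position `q`, inclusive. -/
def seg (S : List Bool) (p q : ℕ) : List Bool := (S.drop p).take (q + 1 - p)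

/-- `IsMatch S p q` : the parenthesis at position `q` is the matching close parenthesis of
the open parenthesis at position `p`, i.e. `q` is the least position `> p` such that the
substring of `S` from `p` to `q` (inclusive) is balanced. -/
def IsMatch (S : List Bool) (p q : ℕ) : Prop :=
  p < q ∧ q < S.length ∧ BalancedParen (seg S p q) ∧
    ∀ r : ℕ, p < r → r < q → ¬ BalancedParen (seg S p r)

/-- `IsNthOpen S i p` : position `p` holds the `i`-th '(' of `S` (1-based `i`). -/
def IsNthOpen (S : List Bool) (i p : ℕ) : Prop :=
  p < S.length ∧ S.getD p false = true ∧ (S.take p).count true = i - 1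

namespace RoseTree

mutual
def info : RoseTree → List (List ℕ × ℕ × ℕ)
  | .node ts => ([], 0, (FList ts).length + 1) ::
      (infoAux 0 ts).map (fun x => (x.1, x.2.1 + 1, x.2.2 + 1))
def infoAux : ℕ → List RoseTree → List (List ℕ × ℕ × ℕ)
  | _, [] => []
  | k, t :: ts =>
      (info t).map (fun x => (k :: x.1, x.2)) ++
      (infoAux (k+1) ts).map (fun x => (x.1, x.2.1 + (F t).length, x.2.2 + (F t).length))
end

mutual
theorem count_F (t : RoseTree) :
    (F t).count true = size t ∧ (F t).count false = size t := by
  match t with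
  | .node ts =>
    have h := count_FList ts
    simp [F, size, List.count_cons, List.count_append, h.1, h.2, Nat.add_comm]
theorem count_FList (ts : List RoseTree) :
    (FList ts).count true = sizeList ts ∧ (FList ts).count false = sizeList ts := by
  match ts with
  | [] => simp [FList, sizeList]
  | t :: ts =>
    have h1 := count_F t
    have h2 := count_FList ts
    simp [FList, sizeList, List.count_append, h1.1, h1.2, h2.1, h2.2]
end

theorem bool_length_count (l : List Bool) : l.length = l.count true + l.count false := by
  induction l with
  | nil => simp
  | cons a l ih =>
    rw [List.length_cons, List.count_cons, List.count_cons, ih]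
    cases a <;> simp <;> omega

theorem length_F (t : RoseTree) : (F t).length = 2 * size t := by
  have h := count_F t
  have := bool_length_count (F t)
  omega

theorem length_FList (ts : List RoseTree) : (FList ts).length = 2 * sizeList ts := by
  have h := count_FList ts
  have := bool_length_count (FList ts)
  omega

mutual
theorem prefix_le_F (t : RoseTree) (k : ℕ) :
    ((F t).take k).count false ≤ ((F t).take k).count true := by
  match t with
  | .node ts =>
    match k with
    | 0 => simp
    | (k+1) =>
      have h := prefix_le_FList ts k
      have hsub : (([false] : List Bool).take (k - (FList ts).length)).count false ≤ 1 := by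
        calc (([false] : List Bool).take (k - (FList ts).length)).count false
            ≤ ([false] : List Bool).count false := (List.take_sublist _ _).count_le _
          _ = 1 := by simp
      simp only [F, List.cons_append, List.take_succ_cons, List.count_cons,
        List.take_append, List.count_append]
      simp
      omega
theorem prefix_le_FList (ts : List RoseTree) (k : ℕ) :
    ((FList ts).take k).count false ≤ ((FList ts).take k).count true := by
  match ts with
  | [] => simp [FList]
  | t :: ts =>
    have h1 := prefix_le_F t k
    have h2 := prefix_le_FList ts (k - (F t).length)
    simp only [FList, List.take_append, List.count_append]
    omega
end

theorem prefix_lt_F (t : RoseTree) (k : ℕ) (hk : 0 < k) (hk2 : k < (F t).length) :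
    ((F t).take k).count false < ((F t).take k).count true := by
  match t with
  | .node ts =>
    match k, hk with
    | (k+1), _ =>
      have hlen : k ≤ (FList ts).length := by
        simp [F] at hk2; omega
      have h := prefix_le_FList ts k
      simp only [F, List.cons_append, List.take_succ_cons, List.count_cons,
        List.take_append_of_le_length hlen]
      simp
      omega

theorem balanced_F (t : RoseTree) : BalancedParen (F t) := by
  refine ⟨(count_F t).1.trans (count_F t).2.symm, fun k => prefix_le_F t k⟩

theorem not_balanced_take_F (t : RoseTree) (k : ℕ) (hk : 0 < k) (hk2 : k < (F t).length) :
    ¬ BalancedParen ((F t).take k) := by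
  intro h
  have h2 := prefix_lt_F t k hk hk2
  have h1 := h.1
  omega

theorem seg_append_right (A B : List Bool) (p q : ℕ) :
    seg (A ++ B) (p + A.length) (q + A.length) = seg B p q := by
  unfold seg
  rw [Nat.add_comm p A.length, List.drop_length_add_append]
  congr 1
  omega

theorem seg_append_left (A B : List Bool) (p q : ℕ) (hpq : p ≤ q) (hq : q < A.length) :
    seg (A ++ B) p q = seg A p q := by
  unfold seg
  rw [List.drop_append]
  have hp : p ≤ A.length := by omega
  rw [List.take_append]
  have h1 : q + 1 - p ≤ (A.drop p).length := by
    rw [List.length_drop]; omega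
  rw [Nat.sub_eq_zero_of_le h1]
  simp

theorem seg_full (S : List Bool) (q : ℕ) (hq : q + 1 = S.length) : seg S 0 q = S := by
  unfold seg
  simp [hq]

theorem seg_length (S : List Bool) (p q : ℕ) (hq : q < S.length) (hpq : p ≤ q) :
    (seg S p q).length = q + 1 - p := by
  unfold seg
  rw [List.length_take, List.length_drop]
  omega

theorem isMatch_of_seg (S : List Bool) (p q : ℕ) (t : RoseTree)
    (hpq : p < q) (hq : q < S.length) (h : seg S p q = F t) : IsMatch S p q := by
  refine ⟨hpq, hq, h ▸ balanced_F t, fun r hr1 hr2 hb => ?_⟩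
  have hlen : (F t).length = q + 1 - p := by
    rw [← h, seg_length S p q hq (le_of_lt hpq)]
  have hseg : seg S p r = (F t).take (r + 1 - p) := by
    rw [← h]
    unfold seg
    rw [List.take_take]
    congr 1
    omega
  have h1 : 0 < r + 1 - p := by omega
  have h2 : r + 1 - p < (F t).length := by omega
  exact not_balanced_take_F t (r + 1 - p) h1 h2 (hseg ▸ hb)

theorem getD_true_of_seg (S : List Bool) (p q : ℕ) (t : RoseTree)
    (hpq : p ≤ q) (hq : q < S.length) (h : seg S p q = F t) : S.getD p false = true := by
  have hp : p < S.length := lt_of_le_of_lt hpq hq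
  rw [List.getD_eq_getElem S false hp]
  have hlen : 0 < (seg S p q).length := by
    rw [seg_length S p q hq hpq]; omega
  have e : (seg S p q)[0]'hlen = true := by
    revert hlen
    rw [h]
    intro hlen
    match t with
    | .node ts => simp [F]
  have h0 : (seg S p q)[0]'hlen = S[p] := by
    simp [seg, List.getElem_take, List.getElem_drop]
  rw [← h0]
  exact e

theorem isNthOpen_unique {S : List Bool} {i p p' : ℕ}
    (h1 : IsNthOpen S i p) (h2 : IsNthOpen S i p') : p = p' := by
  obtain ⟨hp, hg, hc⟩ := h1
  obtain ⟨hp', hg', hc'⟩ := h2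
  by_contra hne
  have key : ∀ a b : ℕ, a < b → b < S.length → S.getD a false = true →
      (S.take a).count true < (S.take b).count true := by
    intro a b hab hb hga
    have ha : a < S.length := lt_trans hab hb
    have hstep : (S.take (a+1)).count true = (S.take a).count true + 1 := by
      rw [List.take_succ]
      have : S[a]? = some S[a] := List.getElem?_eq_getElem ha
      rw [this]
      rw [List.getD_eq_getElem S false ha] at hga
      simp [List.count_append, hga]
    have hmono : (S.take (a+1)).count true ≤ (S.take b).count true := by
      have hsub : S.take (a+1) <+: S.take b := by
        rw [List.prefix_take_iff]
        refine ⟨List.take_prefix _ _, ?_⟩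
        rw [List.length_take]
        omega
      exact hsub.sublist.count_le true
    omega
  rcases Nat.lt_or_ge p p' with h | h
  · have := key p p' h hp' hg; omega
  · have hlt : p' < p := by omega
    have := key p' p hlt hp hg'; omega

theorem isMatch_unique {S : List Bool} {p q q' : ℕ}
    (h1 : IsMatch S p q) (h2 : IsMatch S p q') : q = q' := by
  by_contra hne
  rcases Nat.lt_or_ge q q' with h | h
  · exact h2.2.2.2 q h1.1 h (h1.2.2.1)
  · have : q' < q := by omega
    exact h1.2.2.2 q' h2.1 this (h2.2.2.1)


mutual
theorem paths_eq (t : RoseTree) : preorderPaths t = (info t).map (·.1) := by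
  match t with
  | .node ts =>
    rw [preorderPaths, info]
    simp [List.map_map, pathsAux_eq 0 ts]
theorem pathsAux_eq (k : ℕ) (ts : List RoseTree) :
    preorderPathsAux k ts = (infoAux k ts).map (·.1) := by
  match ts with
  | [] => simp [preorderPathsAux, infoAux]
  | t :: ts =>
    rw [preorderPathsAux, infoAux]
    simp only [List.map_map, List.map_append, paths_eq t, pathsAux_eq (k+1) ts]
    rfl
end

mutual
theorem spec_info (t : RoseTree) : ∀ x ∈ info t,
    x.2.1 < x.2.2 ∧ x.2.2 < (F t).length ∧ ∃ u, seg (F t) x.2.1 x.2.2 = F u := by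
  match t with
  | .node ts =>
    intro x hx
    rw [info] at hx
    rcases List.mem_cons.mp hx with h | h
    · subst h
      refine ⟨?_, ?_, ⟨.node ts, ?_⟩⟩
      · show 0 < (FList ts).length + 1
        omega
      · show (FList ts).length + 1 < (F (RoseTree.node ts)).length
        simp [F]
      · show seg (F (RoseTree.node ts)) 0 ((FList ts).length + 1) = F (RoseTree.node ts)
        apply seg_full
        simp [F]
    · obtain ⟨y, hy, rfl⟩ := List.mem_map.mp h
      obtain ⟨h1, h2, u, h3⟩ := spec_infoAux 0 ts y hy
      refine ⟨?_, ?_, ⟨u, ?_⟩⟩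
      · show y.2.1 + 1 < y.2.2 + 1
        omega
      · show y.2.2 + 1 < (F (RoseTree.node ts)).length
        have : (F (RoseTree.node ts)).length = (FList ts).length + 2 := by simp [F]
        omega
      show seg (F (RoseTree.node ts)) (y.2.1 + 1) (y.2.2 + 1) = F u
      have hF : F (.node ts) = ([true] ++ FList ts) ++ [false] := by simp [F]
      rw [hF]
      have e1 : seg (([true] ++ FList ts) ++ [false]) (y.2.1+1) (y.2.2+1)
          = seg ([true] ++ FList ts) (y.2.1+1) (y.2.2+1) := by
        apply seg_append_left _ _ _ _ (by omega) (by simp; omega)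
      have e2 : seg ([true] ++ FList ts) (y.2.1+1) (y.2.2+1) = seg (FList ts) y.2.1 y.2.2 := by
        have := seg_append_right [true] (FList ts) y.2.1 y.2.2
        simpa using this
      rw [e1, e2, h3]
theorem spec_infoAux (k : ℕ) (ts : List RoseTree) : ∀ x ∈ infoAux k ts,
    x.2.1 < x.2.2 ∧ x.2.2 < (FList ts).length ∧ ∃ u, seg (FList ts) x.2.1 x.2.2 = F u := by
  match ts with
  | [] => intro x hx; simp [infoAux] at hx
  | t :: ts =>
    intro x hx
    rw [infoAux] at hx
    rcases List.mem_append.mp hx with h | h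
    · obtain ⟨y, hy, rfl⟩ := List.mem_map.mp h
      obtain ⟨h1, h2, u, h3⟩ := spec_info t y hy
      refine ⟨h1, ?_, ⟨u, ?_⟩⟩
      · show y.2.2 < (FList (t :: ts)).length
        have : (FList (t :: ts)).length = (F t).length + (FList ts).length := by
          simp [FList]
        omega
      · show seg (FList (t :: ts)) y.2.1 y.2.2 = F u
        rw [FList]
        rw [seg_append_left _ _ _ _ (le_of_lt h1) h2, h3]
    · obtain ⟨y, hy, rfl⟩ := List.mem_map.mp h
      obtain ⟨h1, h2, u, h3⟩ := spec_infoAux (k+1) ts y hy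
      refine ⟨?_, ?_, ⟨u, ?_⟩⟩
      · show y.2.1 + (F t).length < y.2.2 + (F t).length
        omega
      · show y.2.2 + (F t).length < (FList (t :: ts)).length
        have : (FList (t :: ts)).length = (F t).length + (FList ts).length := by
          simp [FList]
        omega
      · show seg (FList (t :: ts)) (y.2.1 + (F t).length) (y.2.2 + (F t).length) = F u
        rw [FList, seg_append_right, h3]
end

theorem head_infoAux (k : ℕ) (ts : List RoseTree) : ∀ x ∈ infoAux k ts,
    ∃ h v', x.1 = h :: v' ∧ k ≤ h := by
  induction ts generalizing k with
  | nil => intro x hx; simp [infoAux] at hx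
  | cons t ts ih =>
    intro x hx
    rw [infoAux] at hx
    rcases List.mem_append.mp hx with h | h
    · obtain ⟨y, hy, rfl⟩ := List.mem_map.mp h
      exact ⟨k, y.1, rfl, le_refl k⟩
    · obtain ⟨y, hy, rfl⟩ := List.mem_map.mp h
      obtain ⟨h, v', he, hk⟩ := ih (k+1) y hy
      exact ⟨h, v', he, by omega⟩

mutual
theorem counts_info (t : RoseTree) :
    (info t).map (fun x => ((F t).take x.2.1).count true) = List.range (size t) := by
  match t with
  | .node ts =>
    rw [info, size, List.map_cons, List.map_map]
    have hcong : ∀ y ∈ infoAux 0 ts,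
        ((fun x => ((F (.node ts)).take x.2.1).count true) ∘
          (fun x => (x.1, x.2.1 + 1, x.2.2 + 1))) y
          = (Nat.succ ∘ (fun x => ((FList ts).take x.2.1).count true)) y := by
      intro y hy
      obtain ⟨h1, h2, _⟩ := spec_infoAux 0 ts y hy
      have hp : y.2.1 ≤ (FList ts).length := by omega
      have hF : F (.node ts) = true :: (FList ts ++ [false]) := by simp [F]
      dsimp only [Function.comp]
      rw [hF, List.take_succ_cons, List.count_cons, List.take_append_of_le_length hp]
      simp [Nat.succ_eq_add_one]
    rw [List.map_congr_left hcong]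
    rw [← List.map_map, counts_infoAux 0 ts]
    rw [Nat.add_comm 1 (sizeList ts), List.range_succ_eq_map]
    simp [F]
theorem counts_infoAux (k : ℕ) (ts : List RoseTree) :
    (infoAux k ts).map (fun x => ((FList ts).take x.2.1).count true)
      = List.range (sizeList ts) := by
  match ts with
  | [] => simp [infoAux, sizeList]
  | t :: ts =>
    rw [infoAux, sizeList, List.map_append, List.map_map, List.map_map]
    have e1 : ∀ y ∈ info t,
        ((fun x => ((FList (t :: ts)).take x.2.1).count true) ∘
          (fun x => (k :: x.1, x.2))) y
          = (fun x => ((F t).take x.2.1).count true) y := by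
      intro y hy
      obtain ⟨h1, h2, _⟩ := spec_info t y hy
      have hp : y.2.1 ≤ (F t).length := by omega
      dsimp only [Function.comp]
      rw [FList, List.take_append_of_le_length hp]
    have e2 : ∀ y ∈ infoAux (k+1) ts,
        ((fun x => ((FList (t :: ts)).take x.2.1).count true) ∘
          (fun x => (x.1, x.2.1 + (F t).length, x.2.2 + (F t).length))) y
          = ((fun m => size t + m) ∘ (fun x => ((FList ts).take x.2.1).count true)) y := by
      intro y hy
      dsimp only [Function.comp]
      rw [FList, List.take_append]
      have h1 : (F t).length ≤ y.2.1 + (F t).length := by omega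
      rw [List.take_of_length_le h1, List.count_append, (count_F t).1]
      have h2 : y.2.1 + (F t).length - (F t).length = y.2.1 := by omega
      rw [h2]
    rw [List.map_congr_left e1, List.map_congr_left e2]
    rw [counts_info t, ← List.map_map, counts_infoAux (k+1) ts, ← List.range_add]
end

def Nrel : (List ℕ × ℕ × ℕ) → (List ℕ × ℕ × ℕ) → Prop := fun x y =>
  (x.1 <+: y.1 ∧ x.1 ≠ y.1 ∧ x.2.1 < y.2.1 ∧ y.2.2 < x.2.2) ∨
  (¬ x.1 <+: y.1 ∧ ¬ y.1 <+: x.1 ∧ x.2.2 < y.2.1)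

theorem nrel_shift (c : ℕ) (y z : List ℕ × ℕ × ℕ) (h : Nrel y z) :
    Nrel (y.1, y.2.1 + c, y.2.2 + c) (z.1, z.2.1 + c, z.2.2 + c) := by
  rcases h with ⟨h1, h2, h3, h4⟩ | ⟨h1, h2, h3⟩
  · exact Or.inl ⟨h1, h2, show y.2.1 + c < z.2.1 + c by omega,
      show z.2.2 + c < y.2.2 + c by omega⟩
  · exact Or.inr ⟨h1, h2, show y.2.2 + c < z.2.1 + c by omega⟩

theorem nrel_cons (k : ℕ) (y z : List ℕ × ℕ × ℕ) (h : Nrel y z) :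
    Nrel (k :: y.1, y.2) (k :: z.1, z.2) := by
  rcases h with ⟨h1, h2, h3, h4⟩ | ⟨h1, h2, h3⟩
  · exact Or.inl ⟨List.cons_prefix_cons.mpr ⟨rfl, h1⟩, by simpa using h2, h3, h4⟩
  · refine Or.inr ⟨?_, ?_, h3⟩
    · intro hc; exact h1 (List.cons_prefix_cons.mp hc).2
    · intro hc; exact h2 (List.cons_prefix_cons.mp hc).2

mutual
theorem pairwise_info (t : RoseTree) : (info t).Pairwise Nrel := by
  match t with
  | .node ts =>
    rw [info]
    refine List.Pairwise.cons ?_ ?_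
    · intro x hx
      obtain ⟨y, hy, rfl⟩ := List.mem_map.mp hx
      obtain ⟨h, v', he, _⟩ := head_infoAux 0 ts y hy
      obtain ⟨h1, h2, _⟩ := spec_infoAux 0 ts y hy
      left
      refine ⟨List.nil_prefix, ?_, ?_, ?_⟩
      · show ([] : List ℕ) ≠ y.1
        rw [he]
        simp
      · show 0 < y.2.1 + 1
        omega
      · show y.2.2 + 1 < (FList ts).length + 1
        omega
    · rw [List.pairwise_map]
      exact (pairwise_infoAux 0 ts).imp (fun h => nrel_shift 1 _ _ h)
theorem pairwise_infoAux (k : ℕ) (ts : List RoseTree) : (infoAux k ts).Pairwise Nrel := by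
  match ts with
  | [] => simp [infoAux]
  | t :: ts =>
    rw [infoAux, List.pairwise_append]
    refine ⟨?_, ?_, ?_⟩
    · rw [List.pairwise_map]
      exact (pairwise_info t).imp (fun h => nrel_cons k _ _ h)
    · rw [List.pairwise_map]
      exact (pairwise_infoAux (k+1) ts).imp (fun h => nrel_shift (F t).length _ _ h)
    · intro a ha b hb
      obtain ⟨y, hy, rfl⟩ := List.mem_map.mp ha
      obtain ⟨z, hz, rfl⟩ := List.mem_map.mp hb
      obtain ⟨h, v', he, hk⟩ := head_infoAux (k+1) ts z hz
      obtain ⟨hy1, hy2, _⟩ := spec_info t y hy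
      right
      refine ⟨?_, ?_, ?_⟩
      · show ¬ k :: y.1 <+: z.1
        rw [he]
        intro hc
        have := (List.cons_prefix_cons.mp hc).1
        omega
      · show ¬ z.1 <+: k :: y.1
        rw [he]
        intro hc
        have := (List.cons_prefix_cons.mp hc).1
        omega
      · show y.2.2 < z.2.1 + (F t).length
        omega
end

mutual
theorem closure_info (t : RoseTree) : ∀ x ∈ info t, ∀ u, u <+: x.1 → u ≠ x.1 →
    ∃ y ∈ info t, y.1 = u := by
  match t with
  | .node ts =>
    intro x hx u hu hne
    rw [info] at hx
    rcases List.mem_cons.mp hx with h | h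
    · subst h
      exact absurd (List.prefix_nil.mp hu) hne
    · obtain ⟨y, hy, rfl⟩ := List.mem_map.mp h
      rcases eq_or_ne u [] with rfl | hu0
      · exact ⟨([], 0, (FList ts).length + 1), by rw [info]; exact List.mem_cons_self, rfl⟩
      · obtain ⟨z, hz, hz1⟩ := closure_infoAux 0 ts y hy u hu hne hu0
        refine ⟨(z.1, z.2.1 + 1, z.2.2 + 1), ?_, hz1⟩
        rw [info]
        exact List.mem_cons_of_mem _ (List.mem_map.mpr ⟨z, hz, rfl⟩)
theorem closure_infoAux (k : ℕ) (ts : List RoseTree) : ∀ x ∈ infoAux k ts, ∀ u,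
    u <+: x.1 → u ≠ x.1 → u ≠ [] → ∃ y ∈ infoAux k ts, y.1 = u := by
  match ts with
  | [] => intro x hx; simp [infoAux] at hx
  | t :: ts =>
    intro x hx u hu hne hu0
    rw [infoAux] at hx
    rcases List.mem_append.mp hx with h | h
    · obtain ⟨y, hy, rfl⟩ := List.mem_map.mp h
      match u, hu0 with
      | a :: u', _ =>
        obtain ⟨hak, hu'⟩ := List.cons_prefix_cons.mp hu
        subst hak
        have hne' : u' ≠ y.1 := fun hc => hne (by simp [hc])
        obtain ⟨z, hz, hz1⟩ := closure_info t y hy u' hu' hne'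
        refine ⟨(a :: z.1, z.2), ?_, ?_⟩
        · rw [infoAux]
          exact List.mem_append_left _ (List.mem_map.mpr ⟨z, hz, rfl⟩)
        · show a :: z.1 = a :: u'
          rw [hz1]
    · obtain ⟨y, hy, rfl⟩ := List.mem_map.mp h
      obtain ⟨z, hz, hz1⟩ := closure_infoAux (k+1) ts y hy u hu hne hu0
      refine ⟨(z.1, z.2.1 + (F t).length, z.2.2 + (F t).length), ?_, hz1⟩
      rw [infoAux]
      exact List.mem_append_right _ (List.mem_map.mpr ⟨z, hz, rfl⟩)
end


end RoseTree

/-- Let `T` be a rose tree with `n` nodes and preorder listing `v₁,…,v_n` (nodes identified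
with their paths from the root, so `v_i` is the parent of `v_j` iff `v_j = v_i ++ [k]` for
some child index `k`). For `1 ≤ i ≤ n` let `p_i` be the position of the `i`-th '(' in `F T`
and `q_i` the position of its matching ')'. Then for `i < j`, `v_i` is the parent of `v_j`
if and only if `(p_i, q_i)` is the closest enclosing pair of `(p_j, q_j)`: `p_i < p_j` and
`q_j < q_i`, and no index `t` satisfies `p_i < p_t < p_j` and `q_j < q_t < q_i`. -/
theorem parent_iff_closest_enclosing (T : RoseTree) (n : ℕ) (hn : n = T.size)
    (i j : ℕ) (hi1 : 1 ≤ i) (hjn : j ≤ n) (hij : i < j)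
    (pi qi pj qj : ℕ)
    (hpi : IsNthOpen (RoseTree.F T) i pi) (hqi : IsMatch (RoseTree.F T) pi qi)
    (hpj : IsNthOpen (RoseTree.F T) j pj) (hqj : IsMatch (RoseTree.F T) pj qj)
    (vi vj : List ℕ)
    (hvi : (RoseTree.preorderPaths T)[i - 1]? = some vi)
    (hvj : (RoseTree.preorderPaths T)[j - 1]? = some vj) :
    (∃ k : ℕ, vj = vi ++ [k]) ↔
      (pi < pj ∧ qj < qi ∧
        ¬ ∃ (t pt qt : ℕ), 1 ≤ t ∧ t ≤ n ∧
            IsNthOpen (RoseTree.F T) t pt ∧ IsMatch (RoseTree.F T) pt qt ∧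
            pi < pt ∧ pt < pj ∧ qj < qt ∧ qt < qi) := by
  classical
  set S := RoseTree.F T with hSdef
  set L := RoseTree.info T with hLdef
  have hlen : L.length = n := by
    have h := congrArg List.length (RoseTree.counts_info T)
    rw [List.length_map, List.length_range] at h
    rw [hn]; exact h
  have hspec : ∀ a (ha : a < L.length),
      (L[a]'ha).2.1 < (L[a]'ha).2.2 ∧ (L[a]'ha).2.2 < S.length ∧
        ∃ u, seg S (L[a]'ha).2.1 (L[a]'ha).2.2 = RoseTree.F u :=
    fun a ha => RoseTree.spec_info T _ (List.getElem_mem ha)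
  have hcount : ∀ a (ha : a < L.length), ((S.take (L[a]'ha).2.1).count true) = a := by
    intro a ha
    have hma : a < (L.map (fun x => ((S.take x.2.1).count true))).length := by
      rw [List.length_map]; exact ha
    have e := List.getElem_of_eq (RoseTree.counts_info T) hma
    rw [List.getElem_map, List.getElem_range] at e
    exact e
  have hopen : ∀ a (ha : a < L.length), IsNthOpen S (a+1) ((L[a]'ha).2.1) := by
    intro a ha
    obtain ⟨h1, h2, u, h3⟩ := hspec a ha
    refine ⟨by omega, ?_, by simpa using hcount a ha⟩
    exact RoseTree.getD_true_of_seg S _ _ u (le_of_lt h1) h2 h3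
  have hmatch : ∀ a (ha : a < L.length), IsMatch S ((L[a]'ha).2.1) ((L[a]'ha).2.2) := by
    intro a ha
    obtain ⟨h1, h2, u, h3⟩ := hspec a ha
    exact RoseTree.isMatch_of_seg S _ _ u h1 h2 h3
  have hpw : ∀ a b (ha : a < L.length) (hb : b < L.length), a < b →
      RoseTree.Nrel (L[a]'ha) (L[b]'hb) := by
    have h := RoseTree.pairwise_info T
    rw [List.pairwise_iff_getElem] at h
    exact fun a b ha hb hab => h a b ha hb hab
  have hmono : ∀ a b (ha : a < L.length) (hb : b < L.length), a < b →
      (L[a]'ha).2.1 < (L[b]'hb).2.1 := by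
    intro a b ha hb hab
    have h := hpw a b ha hb hab
    unfold RoseTree.Nrel at h
    rcases h with ⟨_, _, h, _⟩ | ⟨_, _, h⟩
    · exact h
    · have := (hspec a ha).1; omega
  have hmono' : ∀ a b (ha : a < L.length) (hb : b < L.length),
      (L[a]'ha).2.1 < (L[b]'hb).2.1 → a < b := by
    intro a b ha hb hp
    rcases lt_trichotomy a b with h | h | h
    · exact h
    · subst h; omega
    · have := hmono b a hb ha h; omega
  have ha : i - 1 < L.length := by omega
  have hb : j - 1 < L.length := by omega
  have hgetpath : ∀ a (haa : a < L.length) (v : List ℕ),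
      (RoseTree.preorderPaths T)[a]? = some v → (L[a]'haa).1 = v := by
    intro a haa v hv
    rw [RoseTree.paths_eq] at hv
    have hma : a < ((RoseTree.info T).map (·.1)).length := by
      rw [List.length_map]; exact haa
    rw [List.getElem?_eq_getElem hma, List.getElem_map] at hv
    exact Option.some_injective _ hv
  have hvi' : (L[i-1]'ha).1 = vi := hgetpath _ ha vi hvi
  have hvj' : (L[j-1]'hb).1 = vj := hgetpath _ hb vj hvj
  have hpi' : pi = (L[i-1]'ha).2.1 := by
    have h := hopen (i-1) ha
    rw [show i - 1 + 1 = i by omega] at h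
    exact RoseTree.isNthOpen_unique hpi h
  have hqi' : qi = (L[i-1]'ha).2.2 :=
    RoseTree.isMatch_unique (hpi' ▸ hqi) (hmatch (i-1) ha)
  have hpj' : pj = (L[j-1]'hb).2.1 := by
    have h := hopen (j-1) hb
    rw [show j - 1 + 1 = j by omega] at h
    exact RoseTree.isNthOpen_unique hpj h
  have hqj' : qj = (L[j-1]'hb).2.2 :=
    RoseTree.isMatch_unique (hpj' ▸ hqj) (hmatch (j-1) hb)
  subst hpi' hqi' hpj' hqj'
  have hab : i - 1 < j - 1 := by omega
  have getcongr : ∀ (a b : ℕ) (haa : a < L.length) (hbb : b < L.length), a = b →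
      L[a]'haa = L[b]'hbb := by
    intro a b haa hbb h
    subst h
    rfl
  have strictlen : ∀ (u v : List ℕ), u <+: v → u ≠ v → u.length < v.length := by
    intro u v hu hne
    rcases lt_or_eq_of_le hu.length_le with h | h
    · exact h
    · exact absurd (hu.eq_of_length h) hne
  constructor
  · rintro ⟨k, hk⟩
    have h := hpw _ _ ha hb hab
    unfold RoseTree.Nrel at h
    rcases h with ⟨hpre, hne, h3, h4⟩ | ⟨hnp, _, _⟩
    · refine ⟨h3, h4, ?_⟩
      rintro ⟨t, pt, qt, ht1, htn, hto, htm, h5, h6, h7, h8⟩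
      have hc : t - 1 < L.length := by omega
      have hptc : pt = (L[t-1]'hc).2.1 := by
        have h := hopen (t-1) hc
        rw [show t - 1 + 1 = t by omega] at h
        exact RoseTree.isNthOpen_unique hto h
      have hqtc : qt = (L[t-1]'hc).2.2 :=
        RoseTree.isMatch_unique (hptc ▸ htm) (hmatch (t-1) hc)
      subst hptc hqtc
      have hac : i - 1 < t - 1 := hmono' _ _ ha hc h5
      have hcb : t - 1 < j - 1 := hmono' _ _ hc hb h6
      have hx := hpw _ _ ha hc hac
      unfold RoseTree.Nrel at hx
      rcases hx with ⟨hx1, hx2, _, _⟩ | ⟨_, _, hx3⟩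
      · have hy := hpw _ _ hc hb hcb
        unfold RoseTree.Nrel at hy
        rcases hy with ⟨hy1, hy2, _, _⟩ | ⟨_, _, hy3⟩
        · have l1 := strictlen _ _ hx1 hx2
          have l2 := strictlen _ _ hy1 hy2
          have l3 : (L[j-1]'hb).1.length = (L[i-1]'ha).1.length + 1 := by
            rw [hvi', hvj', hk]; simp
          omega
        · have := (hspec (j-1) hb).1; omega
      · have := (hspec (t-1) hc).1; omega
    · exact absurd (by rw [hvi', hvj', hk]; exact ⟨[k], rfl⟩) hnp
  · rintro ⟨h1, h2, h3⟩
    have h := hpw _ _ ha hb hab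
    unfold RoseTree.Nrel at h
    rcases h with ⟨hpre, hne, _, _⟩ | ⟨_, _, hd⟩
    · obtain ⟨w, hw⟩ := hpre
      match w, hw with
      | [], hw => exact absurd (by simpa using hw) hne
      | [k], hw => exact ⟨k, by rw [← hvj', ← hw, hvi']⟩
      | k :: k2 :: w'', hw =>
        exfalso
        have hlb : (L[j-1]'hb).1.length = (L[i-1]'ha).1.length + (w''.length + 2) := by
          rw [← hw]; simp
        set u := (L[i-1]'ha).1 ++ [k] with hu
        have hupre : u <+: (L[j-1]'hb).1 := ⟨k2 :: w'', by rw [hu, ← hw]; simp⟩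
        have hulen : u.length = (L[i-1]'ha).1.length + 1 := by simp [hu]
        have hune : u ≠ (L[j-1]'hb).1 := by
          intro he
          have := congrArg List.length he
          omega
        obtain ⟨y, hy0, hy1⟩ := RoseTree.closure_info T _ (List.getElem_mem hb) u hupre hune
        have hy : y ∈ L := hy0
        obtain ⟨c, hc, hyc⟩ := List.mem_iff_getElem.mp hy
        have hvau : (L[i-1]'ha).1 <+: u := ⟨[k], rfl⟩
        have hac : i - 1 < c := by
          rcases lt_trichotomy (i-1) c with h | h | h
          · exact h
          · exfalso
            have e : (L[i-1]'ha).1 = u := by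
              rw [getcongr _ _ ha hc h, hyc, hy1]
            have := congrArg List.length e
            omega
          · exfalso
            have hz := hpw _ _ hc ha h
            unfold RoseTree.Nrel at hz
            rw [hyc, hy1] at hz
            rcases hz with ⟨hz1, _, _, _⟩ | ⟨_, hz2, _⟩
            · have := hz1.length_le
              omega
            · exact hz2 hvau
        have hcb : c < j - 1 := by
          rcases lt_trichotomy c (j-1) with h | h | h
          · exact h
          · exfalso
            have e : (L[j-1]'hb).1 = u := by
              rw [← getcongr _ _ hc hb h, hyc, hy1]
            have := congrArg List.length e
            omega
          · exfalso
            have hz := hpw _ _ hb hc h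
            unfold RoseTree.Nrel at hz
            rw [hyc, hy1] at hz
            rcases hz with ⟨hz1, _, _, _⟩ | ⟨_, hz2, _⟩
            · have := hz1.length_le
              omega
            · exact hz2 hupre
        have hx := hpw _ _ ha hc hac
        unfold RoseTree.Nrel at hx
        rw [hyc, hy1] at hx
        rcases hx with ⟨_, _, hx3, hx4⟩ | ⟨hx1, _, _⟩
        · have hyw := hpw _ _ hc hb hcb
          unfold RoseTree.Nrel at hyw
          rw [hyc, hy1] at hyw
          rcases hyw with ⟨_, _, hy3, hy4⟩ | ⟨hy5, _, _⟩
          · refine h3 ⟨c + 1, y.2.1, y.2.2, by omega, by omega, ?_, ?_, hx3, hy3, hy4, hx4⟩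
            · have := hopen c hc
              rwa [hyc] at this
            · have := hmatch c hc
              rwa [hyc] at this
          · exact hy5 hupre
        · exact hx1 hvau
    · have := (hspec (j-1) hb).1; omega
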